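/- arXiv:2201.03483 — 3 statements merged into one kernel-verified Lean document; each statement's English description precedes it below -/
import Mathlib

section
/- Let X, Y be Polish spaces and let μ ∈ P(X)^d, ν ∈ P(Y)^d be d-tuples of Borel probability measures with m_μ = m_ν =: P. Then every κ ∈ K(μ,ν) transports each conditional slice onto the corresponding slice: for P-almost every z ∈ ℝ₊^d and every Borel set B ⊆ Y, ∫_X κ(x,B) μ_z(dx) = ν_z(B). -/
open MeasureTheory ProbabilityTheory ENNReal

noncomputable section

/-- Average probability measure of a `d`-tuple of probability measures. -/
def avgProb {X : Type*} [MeasurableSpace X] {d : ℕ} (μ : Fin d → Measure X) : Measure X :=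
  (d : ℝ≥0∞)⁻¹ • ∑ j, μ j

/-- Vector of Radon–Nikodym derivatives of the tuple with respect to the average. -/
def densityVec {X : Type*} [MeasurableSpace X] {d : ℕ} (μ : Fin d → Measure X) (x : X) :
    Fin d → ℝ :=
  fun j => ((μ j).rnDeriv (avgProb μ) x).toReal

/-- The law of the density vector under the average measure. -/
def mMeasure {X : Type*} [MeasurableSpace X] {d : ℕ} (μ : Fin d → Measure X) :
    Measure (Fin d → ℝ) :=
  (avgProb μ).map (densityVec μ)

/-- `μz` is a disintegration of `μ̄` with respect to the density vector map `μ'`, over the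
mixing measure `P = m_μ`. -/
def IsDisintegration {X : Type*} [MeasurableSpace X] {d : ℕ} (μ : Fin d → Measure X)
    (P : Measure (Fin d → ℝ)) (μz : (Fin d → ℝ) → Measure X) : Prop :=
  (∀ A : Set X, MeasurableSet A → Measurable fun z => μz z A) ∧
    (∀ᵐ z ∂P, IsProbabilityMeasure (μz z)) ∧
    (∀ᵐ z ∂P, μz z {x | densityVec μ x = z}ᶜ = 0) ∧
    (∀ A : Set X, MeasurableSet A → avgProb μ A = ∫⁻ z, μz z A ∂P)

lemma countable_generatePiSystem_aux {β : Type*} {S : Set (Set β)} (hS : S.Countable) :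
    (generatePiSystem S).Countable := by
  have hc : Countable S := hS.to_subtype
  have key : generatePiSystem S ⊆
      Set.range (fun l : List S =>
        List.foldr (fun (s t : Set β) => s ∩ t) Set.univ (l.map Subtype.val)) := by
    intro t ht
    induction ht with
    | base hs => exact ⟨[⟨_, hs⟩], by simp⟩
    | inter hs ht hne ihs iht =>
      obtain ⟨l₁, rfl⟩ := ihs
      obtain ⟨l₂, rfl⟩ := iht
      have hfold : ∀ (l : List (Set β)) (B : Set β),
          List.foldr (fun (s t : Set β) => s ∩ t) B l =
          List.foldr (fun (s t : Set β) => s ∩ t) Set.univ l ∩ B := by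
        intro l B
        induction l with
        | nil => simp
        | cons a l ih => rw [List.foldr_cons, List.foldr_cons, ih, Set.inter_assoc]
      refine ⟨l₁ ++ l₂, ?_⟩
      show List.foldr _ Set.univ ((l₁ ++ l₂).map Subtype.val) = _
      rw [List.map_append, List.foldr_append, hfold]
  exact ((Set.countable_range _).mono key)

section Avg
variable {α : Type*} [MeasurableSpace α] {d : ℕ} (μ : Fin d → Measure α)

lemma sum_isFinite (hμ : ∀ j, IsProbabilityMeasure (μ j)) :
    IsFiniteMeasure (∑ j, μ j) := by
  constructor
  rw [Measure.finset_sum_apply]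
  simp only [measure_univ, Finset.sum_const, Finset.card_univ, Fintype.card_fin, nsmul_eq_mul,
    mul_one]
  exact ENNReal.natCast_lt_top d

lemma avgProb_isProbability (hd : d ≠ 0) (hμ : ∀ j, IsProbabilityMeasure (μ j)) :
    IsProbabilityMeasure (avgProb μ) := by
  constructor
  rw [avgProb, Measure.smul_apply, smul_eq_mul, Measure.finset_sum_apply]
  simp only [measure_univ, Finset.sum_const, Finset.card_univ, Fintype.card_fin, nsmul_eq_mul,
    mul_one]
  exact ENNReal.inv_mul_cancel (Nat.cast_ne_zero.mpr hd) (ENNReal.natCast_ne_top d)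

lemma absCont_avg (j : Fin d) : μ j ≪ avgProb μ := by
  refine Measure.AbsolutelyContinuous.mk fun A hA h0 => ?_
  rw [avgProb, Measure.smul_apply, smul_eq_mul] at h0
  have hd0 : (d:ℝ≥0∞)⁻¹ ≠ 0 := ENNReal.inv_ne_zero.mpr (ENNReal.natCast_ne_top d)
  have hsum : (∑ i, μ i) A = 0 := by
    rcases mul_eq_zero.mp h0 with h | h
    · exact absurd h hd0
    · exact h
  rw [Measure.finset_sum_apply] at hsum
  exact Finset.sum_eq_zero_iff.mp hsum j (Finset.mem_univ j)

lemma avg_absCont_sum : avgProb μ ≪ ∑ j, μ j := by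
  refine Measure.AbsolutelyContinuous.mk fun A hA h0 => ?_
  rw [avgProb, Measure.smul_apply, smul_eq_mul, h0, mul_zero]

lemma rnDeriv_avg_le (hd : d ≠ 0) (hμ : ∀ j, IsProbabilityMeasure (μ j)) (j : Fin d) :
    ∀ᵐ x ∂(avgProb μ), (μ j).rnDeriv (avgProb μ) x ≤ (d : ℝ≥0∞) := by
  haveI := sum_isFinite μ hμ
  have h1 : μ j ≤ ∑ i, μ i := by
    refine Measure.le_iff.mpr fun s hs => ?_
    rw [Measure.finset_sum_apply]
    exact Finset.single_le_sum (f := fun i => μ i s) (fun i _ => zero_le) (Finset.mem_univ j)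
  have h2 : (μ j).rnDeriv (∑ i, μ i) ≤ᵐ[∑ i, μ i] 1 := Measure.rnDeriv_le_one_of_le h1
  have h3 : (μ j).rnDeriv ((d:ℝ≥0∞)⁻¹ • ∑ i, μ i)
      =ᵐ[∑ i, μ i] ((d:ℝ≥0∞)⁻¹)⁻¹ • (μ j).rnDeriv (∑ i, μ i) :=
    Measure.rnDeriv_smul_right_of_ne_top (μ j) (∑ i, μ i)
      (ENNReal.inv_ne_zero.mpr (ENNReal.natCast_ne_top d))
      (ENNReal.inv_ne_top.mpr (Nat.cast_ne_zero.mpr hd))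
  have hsum : ∀ᵐ x ∂(∑ i, μ i), (μ j).rnDeriv (avgProb μ) x ≤ (d : ℝ≥0∞) := by
    filter_upwards [h2, h3] with x hx2 hx3
    have hx3' : (μ j).rnDeriv (avgProb μ) x = ((d:ℝ≥0∞)⁻¹)⁻¹ * (μ j).rnDeriv (∑ i, μ i) x := by
      rw [avgProb]; exact hx3
    rw [hx3', inv_inv]
    calc (d:ℝ≥0∞) * (μ j).rnDeriv (∑ i, μ i) x ≤ (d:ℝ≥0∞) * 1 :=
      mul_le_mul_right hx2 _
    _ = d := mul_one _
  exact hsum.filter_mono (avg_absCont_sum μ).ae_le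

end Avg

/-- if `m_μ = m_ν = P`, every simultaneous transport kernel `κ ∈ K(μ,ν)`
transports the conditional slice `μ_z` exactly onto `ν_z`, for `P`-a.e. `z`. -/
theorem sot_kernel_slices
    {X Y : Type*} [MeasurableSpace X] [TopologicalSpace X] [PolishSpace X] [BorelSpace X]
    [MeasurableSpace Y] [TopologicalSpace Y] [PolishSpace Y] [BorelSpace Y]
    {d : ℕ} (μ : Fin d → Measure X) (ν : Fin d → Measure Y)
    (hμ : ∀ j, IsProbabilityMeasure (μ j)) (hν : ∀ j, IsProbabilityMeasure (ν j))
    (P : Measure (Fin d → ℝ)) (hPμ : mMeasure μ = P) (hPν : mMeasure ν = P)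
    (μz : (Fin d → ℝ) → Measure X) (hμz : IsDisintegration μ P μz)
    (νz : (Fin d → ℝ) → Measure Y) (hνz : IsDisintegration ν P νz)
    (κ : Kernel X Y) (hκ : IsMarkovKernel κ)
    (hκK : ∀ j, ∀ B : Set Y, MeasurableSet B → ν j B ≤ ∫⁻ x, κ x B ∂(μ j)) :
    ∀ᵐ z ∂P, ∀ B : Set Y, MeasurableSet B → ∫⁻ x, κ x B ∂(μz z) = νz z B := by
  rcases Nat.eq_zero_or_pos d with hd0 | hdpos
  · subst hd0
    have hP0 : P = 0 := by
      rw [← hPμ, mMeasure]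
      have h0 : avgProb μ = 0 := by
        simp [avgProb]
      rw [h0]
      simp
    simp [hP0]
  have hd : d ≠ 0 := hdpos.ne'
  haveI hμbarP : IsProbabilityMeasure (avgProb μ) := avgProb_isProbability μ hd hμ
  haveI hνbarP : IsProbabilityMeasure (avgProb ν) := avgProb_isProbability ν hd hν
  have hZm : Measurable (densityVec μ) :=
    measurable_pi_lambda _ fun j => (Measure.measurable_rnDeriv _ _).ennreal_toReal
  have hWm : Measurable (densityVec ν) :=
    measurable_pi_lambda _ fun j => (Measure.measurable_rnDeriv _ _).ennreal_toReal
  haveI hPprob : IsProbabilityMeasure P := by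
    rw [← hPμ, mMeasure]; exact Measure.isProbabilityMeasure_map hZm.aemeasurable
  have hμzm : Measurable μz := Measure.measurable_of_measurable_coe _ hμz.1
  have hνzm : Measurable νz := Measure.measurable_of_measurable_coe _ hνz.1
  have hbindμ : P.bind μz = avgProb μ := by
    refine Measure.ext fun A hA => ?_
    rw [Measure.bind_apply hA hμzm.aemeasurable]
    exact (hμz.2.2.2 A hA).symm
  have hbindν : P.bind νz = avgProb ν := by
    refine Measure.ext fun A hA => ?_
    rw [Measure.bind_apply hA hνzm.aemeasurable]
    exact (hνz.2.2.2 A hA).symm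
  -- κ transports each μ j to ν j exactly
  have htrans : ∀ j, ∀ B : Set Y, MeasurableSet B → ∫⁻ x, κ x B ∂(μ j) = ν j B := by
    intro j B hB
    have hsum : ∫⁻ x, κ x B ∂(μ j) + ∫⁻ x, κ x Bᶜ ∂(μ j) = 1 := by
      rw [← lintegral_add_left (κ.measurable_coe hB)]
      have h1 : ∀ x, κ x B + κ x Bᶜ = 1 := fun x => by
        rw [measure_add_measure_compl hB, measure_univ]
      simp only [h1]
      simp
    have hνsum : ν j B + ν j Bᶜ = 1 := by rw [measure_add_measure_compl hB, measure_univ]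
    refine le_antisymm ?_ (hκK j B hB)
    have hle : ∫⁻ x, κ x B ∂(μ j) + ∫⁻ x, κ x Bᶜ ∂(μ j) ≤ ν j B + ∫⁻ x, κ x Bᶜ ∂(μ j) := by
      rw [hsum, ← hνsum]
      exact add_le_add_right (hκK j Bᶜ hB.compl) _
    have hne : ∫⁻ x, κ x Bᶜ ∂(μ j) ≠ ∞ := by
      have hle1 : ∫⁻ x, κ x Bᶜ ∂(μ j) ≤ 1 := by
        calc ∫⁻ x, κ x Bᶜ ∂(μ j) ≤ ∫⁻ _, 1 ∂(μ j) := lintegral_mono fun x => prob_le_one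
        _ = 1 := by simp
      exact ne_top_of_le_ne_top one_ne_top hle1
    exact (ENNReal.add_le_add_iff_right hne).mp hle
  have hbindj : ∀ j, (μ j).bind (fun x => κ x) = ν j := fun j =>
    Measure.ext fun B hB => by
      rw [Measure.bind_apply hB κ.measurable.aemeasurable]; exact htrans j B hB
  have hbars : ∀ B : Set Y, MeasurableSet B → ∫⁻ x, κ x B ∂(avgProb μ) = avgProb ν B := by
    intro B hB
    simp only [avgProb, lintegral_smul_measure, lintegral_finset_sum_measure,
      Measure.smul_apply, Measure.finset_sum_apply, smul_eq_mul]
    congr 1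
    exact Finset.sum_congr rfl fun j _ => htrans j B hB
  have hbindbar : (avgProb μ).bind (fun x => κ x) = avgProb ν :=
    Measure.ext fun B hB => by
      rw [Measure.bind_apply hB κ.measurable.aemeasurable]; exact hbars B hB
  -- the key pointwise matching of density vectors
  have hj : ∀ j : Fin d, ∀ᵐ x ∂avgProb μ,
      κ x {y | densityVec ν y j ≠ densityVec μ x j} = 0 := by
    intro j
    set u : X → ℝ := fun x => densityVec μ x j with hu_def
    set v : Y → ℝ := fun y => densityVec ν y j with hv_def
    have hum : Measurable u := (measurable_pi_apply j).comp hZm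
    have hvm : Measurable v := (measurable_pi_apply j).comp hWm
    have hu0 : ∀ x, 0 ≤ u x := fun x => ENNReal.toReal_nonneg
    have hv0 : ∀ y, 0 ≤ v y := fun y => ENNReal.toReal_nonneg
    have hfin : ∀ᵐ x ∂avgProb μ, ENNReal.ofReal (u x) = (μ j).rnDeriv (avgProb μ) x := by
      filter_upwards [Measure.rnDeriv_lt_top (μ j) (avgProb μ)] with x hx
      simp only [hu_def, densityVec]
      exact ENNReal.ofReal_toReal hx.ne
    have hgfin : ∀ᵐ y ∂avgProb ν, ENNReal.ofReal (v y) = (ν j).rnDeriv (avgProb ν) y := by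
      filter_upwards [Measure.rnDeriv_lt_top (ν j) (avgProb ν)] with y hy
      simp only [hv_def, densityVec]
      exact ENNReal.ofReal_toReal hy.ne
    have hvb : ∀ᵐ y ∂avgProb ν, v y ≤ d := by
      filter_upwards [rnDeriv_avg_le ν hd hν j] with y h1
      calc v y = ((ν j).rnDeriv (avgProb ν) y).toReal := rfl
        _ ≤ ((d : ℝ≥0∞)).toReal := ENNReal.toReal_mono (ENNReal.natCast_ne_top d) h1
        _ = d := by simp
    set H : X → ℝ≥0∞ := fun x => ∫⁻ y, ENNReal.ofReal (v y) ∂κ x with hH_def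
    have hH : Measurable H :=
      Measurable.lintegral_kernel_prod_right' (hvm.comp measurable_snd).ennreal_ofReal
    set B2 : ℝ≥0∞ := ∫⁻ y, ENNReal.ofReal (v y ^ 2) ∂avgProb ν with hB2_def
    -- (1) the second moments agree
    have hA : ∫⁻ x, ENNReal.ofReal (u x ^ 2) ∂avgProb μ = B2 := by
      have hm : Measurable fun z : Fin d → ℝ => ENNReal.ofReal (z j ^ 2) :=
        ((measurable_pi_apply j).pow_const 2).ennreal_ofReal
      calc ∫⁻ x, ENNReal.ofReal (u x ^ 2) ∂avgProb μ
          = ∫⁻ z, ENNReal.ofReal (z j ^ 2) ∂(mMeasure μ) := by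
            rw [mMeasure, lintegral_map hm hZm]
        _ = ∫⁻ z, ENNReal.ofReal (z j ^ 2) ∂(mMeasure ν) := by rw [hPμ, hPν]
        _ = B2 := by rw [mMeasure, lintegral_map hm hWm]
    -- value of ∫ ofReal (v) dν j
    have hvj : ∫⁻ y, ENNReal.ofReal (v y) ∂(ν j) = B2 := by
      have hwd : ν j = (avgProb ν).withDensity ((ν j).rnDeriv (avgProb ν)) :=
        (Measure.withDensity_rnDeriv_eq _ _ (absCont_avg ν j)).symm
      rw [hwd, lintegral_withDensity_eq_lintegral_mul _ (Measure.measurable_rnDeriv _ _)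
        hvm.ennreal_ofReal]
      refine lintegral_congr_ae ?_
      filter_upwards [hgfin] with y hy
      simp only [Pi.mul_apply]
      rw [← hy, ← ENNReal.ofReal_mul (hv0 y), ← pow_two]
    -- (2) the cross term
    have hC : ∫⁻ x, ENNReal.ofReal (u x) * H x ∂avgProb μ = B2 := by
      calc ∫⁻ x, ENNReal.ofReal (u x) * H x ∂avgProb μ
          = ∫⁻ x, ((μ j).rnDeriv (avgProb μ) * H) x ∂avgProb μ := by
            refine lintegral_congr_ae (hfin.mono fun x hx => ?_)
            simp only [Pi.mul_apply]
            rw [hx]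
        _ = ∫⁻ x, H x ∂((avgProb μ).withDensity ((μ j).rnDeriv (avgProb μ))) :=
            (lintegral_withDensity_eq_lintegral_mul _ (Measure.measurable_rnDeriv _ _) hH).symm
        _ = ∫⁻ x, H x ∂(μ j) := by
            rw [Measure.withDensity_rnDeriv_eq _ _ (absCont_avg μ j)]
        _ = ∫⁻ y, ENNReal.ofReal (v y) ∂((μ j).bind (fun x => κ x)) :=
            (Measure.lintegral_bind κ.measurable.aemeasurable hvm.ennreal_ofReal.aemeasurable).symm
        _ = ∫⁻ y, ENNReal.ofReal (v y) ∂(ν j) := by rw [hbindj j]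
        _ = B2 := hvj
    -- pointwise algebraic identity
    have hpt : ∀ x y, ENNReal.ofReal ((u x - v y) ^ 2) + ENNReal.ofReal (2 * (u x * v y))
        = ENNReal.ofReal (u x ^ 2) + ENNReal.ofReal (v y ^ 2) := by
      intro x y
      rw [← ENNReal.ofReal_add (sq_nonneg _)
        (mul_nonneg zero_le_two (mul_nonneg (hu0 x) (hv0 y))),
        ← ENNReal.ofReal_add (sq_nonneg _) (sq_nonneg _)]
      congr 1
      ring
    have hqy : ∀ x, Measurable fun y => ENNReal.ofReal ((u x - v y) ^ 2) := fun x =>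
      ((measurable_const.sub hvm).pow_const 2).ennreal_ofReal
    have h2uv : ∀ x, ∫⁻ y, ENNReal.ofReal (2 * (u x * v y)) ∂κ x
        = 2 * (ENNReal.ofReal (u x) * H x) := by
      intro x
      have hptm : ∀ y, ENNReal.ofReal (2 * (u x * v y))
          = 2 * ENNReal.ofReal (u x) * ENNReal.ofReal (v y) := by
        intro y
        rw [ENNReal.ofReal_mul zero_le_two, ENNReal.ofReal_mul (hu0 x), ENNReal.ofReal_ofNat,
          ← mul_assoc]
      simp_rw [hptm]
      rw [lintegral_const_mul _ hvm.ennreal_ofReal, mul_assoc]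
    have hinner : ∀ x, (∫⁻ y, ENNReal.ofReal ((u x - v y) ^ 2) ∂κ x)
        + 2 * (ENNReal.ofReal (u x) * H x)
        = ENNReal.ofReal (u x ^ 2) + ∫⁻ y, ENNReal.ofReal (v y ^ 2) ∂κ x := by
      intro x
      rw [← h2uv x, ← lintegral_add_left (hqy x)]
      have hcongr : ∫⁻ y, (ENNReal.ofReal ((u x - v y) ^ 2) + ENNReal.ofReal (2 * (u x * v y))) ∂κ x
          = ∫⁻ y, (ENNReal.ofReal (u x ^ 2) + ENNReal.ofReal (v y ^ 2)) ∂κ x :=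
        lintegral_congr fun y => hpt x y
      rw [hcongr, lintegral_add_left measurable_const, lintegral_const, measure_univ, mul_one]
    -- integrate the identity
    have hmq : Measurable fun x => ∫⁻ y, ENNReal.ofReal ((u x - v y) ^ 2) ∂κ x :=
      Measurable.lintegral_kernel_prod_right'
        (((hum.comp measurable_fst).sub (hvm.comp measurable_snd)).pow_const 2).ennreal_ofReal
    have hVin : ∫⁻ x, ∫⁻ y, ENNReal.ofReal (v y ^ 2) ∂κ x ∂avgProb μ = B2 := by
      rw [← Measure.lintegral_bind κ.measurable.aemeasurable (hvm.pow_const 2).ennreal_ofReal.aemeasurable, hbindbar]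
    have houter : (∫⁻ x, ∫⁻ y, ENNReal.ofReal ((u x - v y) ^ 2) ∂κ x ∂avgProb μ) + 2 * B2
        = B2 + B2 := by
      have hL : ∫⁻ x, ((∫⁻ y, ENNReal.ofReal ((u x - v y) ^ 2) ∂κ x)
          + 2 * (ENNReal.ofReal (u x) * H x)) ∂avgProb μ
          = (∫⁻ x, ∫⁻ y, ENNReal.ofReal ((u x - v y) ^ 2) ∂κ x ∂avgProb μ)
          + ∫⁻ x, 2 * (ENNReal.ofReal (u x) * H x) ∂avgProb μ :=
        lintegral_add_left hmq _
      have hR : ∫⁻ x, (ENNReal.ofReal (u x ^ 2) + ∫⁻ y, ENNReal.ofReal (v y ^ 2) ∂κ x) ∂avgProb μ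
          = (∫⁻ x, ENNReal.ofReal (u x ^ 2) ∂avgProb μ)
          + ∫⁻ x, ∫⁻ y, ENNReal.ofReal (v y ^ 2) ∂κ x ∂avgProb μ :=
        lintegral_add_left (hum.pow_const 2).ennreal_ofReal _
      have hmid : ∫⁻ x, 2 * (ENNReal.ofReal (u x) * H x) ∂avgProb μ = 2 * B2 := by
        rw [lintegral_const_mul (f := fun x => ENNReal.ofReal (u x) * H x) _ (hum.ennreal_ofReal.mul hH), hC]
      have hcg : (∫⁻ x, ((∫⁻ y, ENNReal.ofReal ((u x - v y) ^ 2) ∂κ x)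
          + 2 * (ENNReal.ofReal (u x) * H x)) ∂avgProb μ)
          = ∫⁻ x, (ENNReal.ofReal (u x ^ 2) + ∫⁻ y, ENNReal.ofReal (v y ^ 2) ∂κ x) ∂avgProb μ :=
        lintegral_congr hinner
      rw [hL, hmid] at hcg
      rw [hR, hA, hVin] at hcg
      exact hcg
    have hB2top : B2 ≠ ∞ := by
      have hle : B2 ≤ ENNReal.ofReal ((d : ℝ) ^ 2) := by
        calc B2 ≤ ∫⁻ _, ENNReal.ofReal ((d : ℝ) ^ 2) ∂avgProb ν := by
              refine lintegral_mono_ae (hvb.mono fun y hy => ENNReal.ofReal_le_ofReal ?_)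
              have := hv0 y
              nlinarith
        _ = ENNReal.ofReal ((d : ℝ) ^ 2) := by simp
      exact (hle.trans_lt ENNReal.ofReal_lt_top).ne
    have hQ : ∫⁻ x, ∫⁻ y, ENNReal.ofReal ((u x - v y) ^ 2) ∂κ x ∂avgProb μ = 0 := by
      have h2B : 2 * B2 ≠ ∞ := ENNReal.mul_ne_top (by norm_num) hB2top
      have h0 : (∫⁻ x, ∫⁻ y, ENNReal.ofReal ((u x - v y) ^ 2) ∂κ x ∂avgProb μ) + 2 * B2
          = 0 + 2 * B2 := by
        rw [houter, zero_add, two_mul]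
      exact (ENNReal.add_left_inj h2B).mp h0
    have hae1 : ∀ᵐ x ∂avgProb μ, ∫⁻ y, ENNReal.ofReal ((u x - v y) ^ 2) ∂κ x = 0 :=
      (lintegral_eq_zero_iff hmq).mp hQ
    filter_upwards [hae1] with x hx
    have h2 : ∀ᵐ y ∂κ x, ENNReal.ofReal ((u x - v y) ^ 2) = 0 :=
      (lintegral_eq_zero_iff (hqy x)).mp hx
    rw [ae_iff] at h2
    refine measure_mono_null (fun y hy => ?_) h2
    simp only [Set.mem_setOf_eq] at hy ⊢
    intro h0
    apply hy
    have hle0 : (u x - v y) ^ 2 ≤ 0 := ENNReal.ofReal_eq_zero.mp h0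
    have hsq : (u x - v y) ^ 2 = 0 := le_antisymm hle0 (sq_nonneg _)
    have hzero : u x - v y = 0 := by
      exact pow_eq_zero_iff (two_ne_zero) |>.mp hsq
    have : u x = v y := by linarith
    exact this.symm
  -- combine over all coordinates
  have hEq : ∀ᵐ x ∂avgProb μ, κ x {y | densityVec ν y ≠ densityVec μ x} = 0 := by
    have hall := ae_all_iff.mpr hj
    filter_upwards [hall] with x hx
    have hsub : {y | densityVec ν y ≠ densityVec μ x}
        ⊆ ⋃ j, {y | densityVec ν y j ≠ densityVec μ x j} := by
      intro y hy
      simp only [Set.mem_setOf_eq, Set.mem_iUnion] at hy ⊢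
      by_contra hcon
      push_neg at hcon
      exact hy (funext hcon)
    exact measure_mono_null hsub (measure_iUnion_null fun j => hx j)
  -- main per-set statement
  have main : ∀ B : Set Y, MeasurableSet B →
      ∀ᵐ z ∂P, ∫⁻ x, κ x B ∂μz z = νz z B := by
    intro B hB
    have hFm : Measurable fun z => ∫⁻ x, κ x B ∂μz z :=
      (Measure.measurable_lintegral (κ.measurable_coe hB)).comp hμzm
    have hGm : Measurable fun z => νz z B := hνz.1 B hB
    refine ae_eq_of_forall_setLIntegral_eq_of_sigmaFinite hFm hGm fun s hs _ => ?_
    have hindm : Measurable fun z : Fin d → ℝ => s.indicator (fun _ => (1:ℝ≥0∞)) z :=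
      measurable_const.indicator hs
    have hindB : Measurable fun y : Y => B.indicator (fun _ => (1:ℝ≥0∞)) y :=
      measurable_const.indicator hB
    have hLHS : ∫⁻ z in s, (∫⁻ x, κ x B ∂μz z) ∂P
        = ∫⁻ y, s.indicator (fun _ => (1:ℝ≥0∞)) (densityVec ν y)
            * B.indicator (fun _ => (1:ℝ≥0∞)) y ∂avgProb ν := by
      calc ∫⁻ z in s, (∫⁻ x, κ x B ∂μz z) ∂P
          = ∫⁻ z, s.indicator (fun _ => (1:ℝ≥0∞)) z * (∫⁻ x, κ x B ∂μz z) ∂P := by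
            rw [← lintegral_indicator hs]
            refine lintegral_congr fun z => ?_
            by_cases hzs : z ∈ s <;> simp [hzs]
        _ = ∫⁻ z, ∫⁻ x, s.indicator (fun _ => (1:ℝ≥0∞)) (densityVec μ x) * κ x B ∂μz z ∂P := by
            refine lintegral_congr_ae ?_
            filter_upwards [hμz.2.2.1] with z hz
            have hzae : ∀ᵐ x ∂μz z, densityVec μ x = z := by
              rw [ae_iff]; exact hz
            calc s.indicator (fun _ => (1:ℝ≥0∞)) z * ∫⁻ x, κ x B ∂μz z
                = ∫⁻ x, s.indicator (fun _ => (1:ℝ≥0∞)) z * κ x B ∂μz z :=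
                  (lintegral_const_mul _ (κ.measurable_coe hB)).symm
              _ = ∫⁻ x, s.indicator (fun _ => (1:ℝ≥0∞)) (densityVec μ x) * κ x B ∂μz z := by
                  refine lintegral_congr_ae (hzae.mono fun x hx => ?_)
                  simp only [hx]
        _ = ∫⁻ x, s.indicator (fun _ => (1:ℝ≥0∞)) (densityVec μ x) * κ x B ∂(P.bind μz) :=
            (Measure.lintegral_bind hμzm.aemeasurable ((hindm.comp hZm).mul (κ.measurable_coe hB)).aemeasurable).symm
        _ = ∫⁻ x, s.indicator (fun _ => (1:ℝ≥0∞)) (densityVec μ x) * κ x B ∂avgProb μ := by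
            rw [hbindμ]
        _ = ∫⁻ x, ∫⁻ y, s.indicator (fun _ => (1:ℝ≥0∞)) (densityVec μ x)
              * B.indicator (fun _ => (1:ℝ≥0∞)) y ∂κ x ∂avgProb μ := by
            refine lintegral_congr fun x => ?_
            rw [lintegral_const_mul _ hindB]
            congr 1
            rw [lintegral_indicator hB]
            simp
        _ = ∫⁻ x, ∫⁻ y, s.indicator (fun _ => (1:ℝ≥0∞)) (densityVec ν y)
              * B.indicator (fun _ => (1:ℝ≥0∞)) y ∂κ x ∂avgProb μ := by
            refine lintegral_congr_ae ?_
            filter_upwards [hEq] with x hx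
            refine lintegral_congr_ae ?_
            have hyae : ∀ᵐ y ∂κ x, densityVec ν y = densityVec μ x := by
              rw [ae_iff]; exact hx
            exact hyae.mono fun y hy => by simp only [hy]
        _ = ∫⁻ y, s.indicator (fun _ => (1:ℝ≥0∞)) (densityVec ν y)
              * B.indicator (fun _ => (1:ℝ≥0∞)) y ∂((avgProb μ).bind (fun x => κ x)) :=
            (Measure.lintegral_bind κ.measurable.aemeasurable ((hindm.comp hWm).mul hindB).aemeasurable).symm
        _ = _ := by rw [hbindbar]
    have hRHS : ∫⁻ z in s, νz z B ∂P
        = ∫⁻ y, s.indicator (fun _ => (1:ℝ≥0∞)) (densityVec ν y)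
            * B.indicator (fun _ => (1:ℝ≥0∞)) y ∂avgProb ν := by
      calc ∫⁻ z in s, νz z B ∂P
          = ∫⁻ z, s.indicator (fun _ => (1:ℝ≥0∞)) z * νz z B ∂P := by
            rw [← lintegral_indicator hs]
            refine lintegral_congr fun z => ?_
            by_cases hzs : z ∈ s <;> simp [hzs]
        _ = ∫⁻ z, ∫⁻ y, s.indicator (fun _ => (1:ℝ≥0∞)) (densityVec ν y)
              * B.indicator (fun _ => (1:ℝ≥0∞)) y ∂νz z ∂P := by
            refine lintegral_congr_ae ?_
            filter_upwards [hνz.2.2.1] with z hz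
            have hzae : ∀ᵐ y ∂νz z, densityVec ν y = z := by
              rw [ae_iff]; exact hz
            calc s.indicator (fun _ => (1:ℝ≥0∞)) z * νz z B
                = ∫⁻ y, s.indicator (fun _ => (1:ℝ≥0∞)) z
                    * B.indicator (fun _ => (1:ℝ≥0∞)) y ∂νz z := by
                  rw [lintegral_const_mul _ hindB]
                  congr 1
                  rw [lintegral_indicator hB]
                  simp
              _ = ∫⁻ y, s.indicator (fun _ => (1:ℝ≥0∞)) (densityVec ν y)
                    * B.indicator (fun _ => (1:ℝ≥0∞)) y ∂νz z := by
                  refine lintegral_congr_ae (hzae.mono fun y hy => ?_)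
                  simp only [hy]
        _ = ∫⁻ y, s.indicator (fun _ => (1:ℝ≥0∞)) (densityVec ν y)
              * B.indicator (fun _ => (1:ℝ≥0∞)) y ∂(P.bind νz) :=
            (Measure.lintegral_bind hνzm.aemeasurable ((hindm.comp hWm).mul hindB).aemeasurable).symm
        _ = _ := by rw [hbindν]
    rw [hLHS, hRHS]
  -- upgrade to all measurable sets simultaneously via a countable π-system
  set S : Set (Set Y) := generatePiSystem (MeasurableSpace.countableGeneratingSet Y) with hS_def
  have hSc : S.Countable :=
    countable_generatePiSystem_aux MeasurableSpace.countable_countableGeneratingSet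
  have hSmeas : ∀ s ∈ S, MeasurableSet s := by
    intro s hs
    induction hs with
    | base h => exact MeasurableSpace.measurableSet_countableGeneratingSet h
    | inter _ _ _ ih1 ih2 => exact ih1.inter ih2
  have hSgen : ‹MeasurableSpace Y› = MeasurableSpace.generateFrom S := by
    rw [hS_def, generateFrom_generatePiSystem_eq,
      MeasurableSpace.generateFrom_countableGeneratingSet]
  have hSpi : IsPiSystem S := isPiSystem_generatePiSystem _
  have hall : ∀ᵐ z ∂P, ∀ s ∈ S, ∫⁻ x, κ x s ∂μz z = νz z s :=
    (ae_ball_iff hSc).mpr fun s hs => main s (hSmeas s hs)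
  filter_upwards [hall, hμz.2.1, hνz.2.1] with z hz hμp hνp
  intro B hB
  haveI := hμp; haveI := hνp
  have hbindz : ∀ B : Set Y, MeasurableSet B →
      ((μz z).bind (fun x => κ x)) B = ∫⁻ x, κ x B ∂μz z :=
    fun B hB => Measure.bind_apply hB κ.measurable.aemeasurable
  have huniv : ((μz z).bind (fun x => κ x)) Set.univ = 1 := by
    rw [hbindz _ MeasurableSet.univ]
    simp
  haveI : IsFiniteMeasure ((μz z).bind (fun x => κ x)) :=
    ⟨by rw [huniv]; exact one_lt_top⟩
  have hmeq : (μz z).bind (fun x => κ x) = νz z := by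
    refine ext_of_generate_finite S hSgen hSpi (fun s hs => ?_) ?_
    · rw [hbindz s (hSmeas s hs)]; exact hz s hs
    · rw [huniv, measure_univ]
  rw [← hbindz B hB, hmeq]

end
end

section
/- Let X be a Polish space, let μ, ν ∈ P(X)^d be d-tuples of Borel probability measures on X such that both Π(μ,ν) and Π(ν,μ) are nonempty, and let c : X×X → [0,∞) be continuous and symmetric, c(x,y) = c(y,x). Then the simultaneous optimal transport cost is symmetric: I_c(μ,ν) = I_c(ν,μ). -/
open MeasureTheory ProbabilityTheory ENNReal
open scoped NNReal

noncomputable section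

/-- Simultaneous optimal transport cost `I_c(μ,ν)` (with reference measure `μ̄`,
`+∞` if no transport exists). -/
def sotInfCost {X : Type*} [MeasurableSpace X] {d : ℕ}
    (μ : Fin d → Measure X) (ν : Fin d → Measure X) (c : X × X → ℝ≥0∞) : ℝ≥0∞ :=
  sInf {r | ∃ κ : Kernel X X, IsMarkovKernel κ ∧
    (∀ j, ∀ B : Set X, MeasurableSet B → ν j B ≤ ∫⁻ x, κ x B ∂(μ j)) ∧
    r = ∫⁻ x, ∫⁻ y, c (x, y) ∂(κ x) ∂(avgProb μ)}

namespace SOTSymmAux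

variable {X : Type*} [MeasurableSpace X] {d : ℕ}

/-- Capped density of `μ j` with respect to the average measure. -/
def dens (μ : Fin d → Measure X) (j : Fin d) : X → ℝ≥0∞ :=
  fun x => min ((μ j).rnDeriv (avgProb μ) x) d

lemma dens_measurable (μ : Fin d → Measure X) (j : Fin d) : Measurable (dens μ j) :=
  (Measure.measurable_rnDeriv _ _).min measurable_const

lemma dens_le (μ : Fin d → Measure X) (j : Fin d) (x : X) : dens μ j x ≤ d :=
  min_le_right _ _

lemma avgProb_apply (μ : Fin d → Measure X) (s : Set X) :
    avgProb μ s = (d : ℝ≥0∞)⁻¹ * ∑ j, μ j s := by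
  simp [avgProb, Measure.finset_sum_apply]

lemma isProbabilityMeasure_avgProb (hd : d ≠ 0) (μ : Fin d → Measure X)
    (hμ : ∀ j, IsProbabilityMeasure (μ j)) : IsProbabilityMeasure (avgProb μ) := by
  constructor
  have h1 : ∀ j, μ j Set.univ = 1 := fun j => (hμ j).measure_univ
  rw [avgProb_apply]
  simp only [h1, Finset.sum_const, Finset.card_univ, Fintype.card_fin, nsmul_eq_mul, mul_one]
  exact ENNReal.inv_mul_cancel (by exact_mod_cast hd) (ENNReal.natCast_ne_top d)

lemma smul_avgProb (hd : d ≠ 0) (μ : Fin d → Measure X) :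
    (d : ℝ≥0∞) • avgProb μ = ∑ j, μ j := by
  rw [avgProb, smul_smul, ENNReal.mul_inv_cancel (by exact_mod_cast hd) (ENNReal.natCast_ne_top d),
    one_smul]

lemma le_smul_avgProb (hd : d ≠ 0) (μ : Fin d → Measure X) (j : Fin d) :
    μ j ≤ (d : ℝ≥0∞) • avgProb μ := by
  rw [smul_avgProb hd]
  refine Measure.le_iff.mpr fun s hs => ?_
  rw [Measure.finset_sum_apply]
  exact Finset.single_le_sum (f := fun i => μ i s) (fun i _ => zero_le) (Finset.mem_univ j)

lemma absCont (hd : d ≠ 0) (μ : Fin d → Measure X) (j : Fin d) : μ j ≪ avgProb μ :=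
  Measure.absolutelyContinuous_of_le_smul (le_smul_avgProb hd μ j)

lemma withDensity_dens (hd : d ≠ 0) (μ : Fin d → Measure X)
    (hμ : ∀ j, IsProbabilityMeasure (μ j)) (j : Fin d) :
    (avgProb μ).withDensity (dens μ j) = μ j := by
  haveI := isProbabilityMeasure_avgProb hd μ hμ
  haveI := hμ j
  have hac := absCont hd μ j
  have hle : (μ j).rnDeriv (avgProb μ) ≤ᵐ[avgProb μ] fun _ => (d : ℝ≥0∞) := by
    refine ae_le_of_forall_setLIntegral_le_of_sigmaFinite (Measure.measurable_rnDeriv _ _)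
      (fun s hs _ => ?_)
    rw [Measure.setLIntegral_rnDeriv hac]
    calc μ j s ≤ ((d : ℝ≥0∞) • avgProb μ) s := le_smul_avgProb hd μ j s
      _ = (d : ℝ≥0∞) * avgProb μ s := rfl
      _ = ∫⁻ _ in s, (d : ℝ≥0∞) ∂avgProb μ := by rw [setLIntegral_const]
  have hcongr : dens μ j =ᵐ[avgProb μ] (μ j).rnDeriv (avgProb μ) :=
    hle.mono fun x hx => min_eq_left hx
  rw [withDensity_congr_ae hcongr, Measure.withDensity_rnDeriv_eq _ _ hac]

lemma constraint_eq (μ ν : Fin d → Measure X)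
    (hμ : ∀ j, IsProbabilityMeasure (μ j)) (hν : ∀ j, IsProbabilityMeasure (ν j))
    (κ : Kernel X X) (hκ : IsMarkovKernel κ)
    (h : ∀ j, ∀ B : Set X, MeasurableSet B → ν j B ≤ ∫⁻ x, κ x B ∂(μ j)) :
    ∀ j (B : Set X), MeasurableSet B → ∫⁻ x, κ x B ∂(μ j) = ν j B := by
  intro j B hB
  haveI := hμ j; haveI := hν j
  have h2 : ν j Bᶜ ≤ ∫⁻ x, κ x Bᶜ ∂(μ j) := h j Bᶜ hB.compl
  have hone : ∀ x, κ x B + κ x Bᶜ = 1 := by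
    intro x
    haveI := hκ.isProbabilityMeasure x
    rw [measure_add_measure_compl hB]
    exact measure_univ
  have hadd : (∫⁻ x, κ x B ∂(μ j)) + ∫⁻ x, κ x Bᶜ ∂(μ j) = 1 := by
    rw [← lintegral_add_left (Kernel.measurable_coe κ hB)]
    simp only [hone]
    simp [measure_univ]
  have hν' : ν j B + ν j Bᶜ = 1 := by
    rw [measure_add_measure_compl hB]; exact measure_univ
  refine le_antisymm ?_ (h j B hB)
  have hc : (∫⁻ x, κ x B ∂(μ j)) + ν j Bᶜ ≤ ν j B + ν j Bᶜ := by
    calc (∫⁻ x, κ x B ∂(μ j)) + ν j Bᶜ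
        ≤ (∫⁻ x, κ x B ∂(μ j)) + ∫⁻ x, κ x Bᶜ ∂(μ j) := add_le_add le_rfl h2
      _ = 1 := hadd
      _ = ν j B + ν j Bᶜ := hν'.symm
  exact ENNReal.le_of_add_le_add_right (measure_ne_top _ _) hc

/-- Cauchy–Schwarz (second-moment) inequality and its equality case for a bounded
nonnegative function on a probability space. -/
lemma fiber {ρ : Measure X} [IsProbabilityMeasure ρ] {f : X → ℝ≥0∞} {C : ℝ≥0∞}
    (hm : Measurable f) (hC : C ≠ ∞) (hf : ∀ x, f x ≤ C) :
    (∫⁻ x, f x ∂ρ) * (∫⁻ x, f x ∂ρ) ≤ ∫⁻ x, f x * f x ∂ρ ∧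
    ((∫⁻ x, f x ∂ρ) * (∫⁻ x, f x ∂ρ) = ∫⁻ x, f x * f x ∂ρ →
      f =ᵐ[ρ] fun _ => ∫⁻ x, f x ∂ρ) := by
  have hfin : ∀ x, f x ≠ ∞ := fun x => ne_top_of_le_ne_top hC (hf x)
  set h : X → ℝ := fun x => (f x).toReal with hh
  have hhm : Measurable h := hm.ennreal_toReal
  have hh0 : ∀ x, 0 ≤ h x := fun x => ENNReal.toReal_nonneg
  have hhC : ∀ x, h x ≤ C.toReal := fun x =>
    (ENNReal.toReal_le_toReal (hfin x) hC).mpr (hf x)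
  have hint : Integrable h ρ := by
    refine (integrable_const C.toReal).mono' hhm.aestronglyMeasurable (ae_of_all _ fun x => ?_)
    rw [Real.norm_eq_abs, abs_of_nonneg (hh0 x)]
    exact hhC x
  have hint2 : Integrable (fun x => h x * h x) ρ := by
    refine (integrable_const (C.toReal * C.toReal)).mono'
      (hhm.mul hhm).aestronglyMeasurable (ae_of_all _ fun x => ?_)
    rw [Real.norm_eq_abs, abs_of_nonneg (mul_nonneg (hh0 x) (hh0 x))]
    exact mul_le_mul (hhC x) (hhC x) (hh0 x) ((hh0 x).trans (hhC x))
  have hI : ∫ x, h x ∂ρ = (∫⁻ x, f x ∂ρ).toReal :=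
    integral_toReal hm.aemeasurable (ae_of_all _ fun x => lt_top_iff_ne_top.2 (hfin x))
  have hI2 : ∫ x, h x * h x ∂ρ = (∫⁻ x, f x * f x ∂ρ).toReal := by
    have heq : (fun x => h x * h x) = fun x => ((f x) * (f x)).toReal := by
      funext x; rw [ENNReal.toReal_mul]
    rw [heq]
    exact integral_toReal (hm.mul hm).aemeasurable
      (ae_of_all _ fun x => ENNReal.mul_lt_top (lt_top_iff_ne_top.2 (hfin x))
        (lt_top_iff_ne_top.2 (hfin x)))
  have hfinI : ∫⁻ x, f x ∂ρ ≠ ∞ := by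
    refine ne_top_of_le_ne_top hC ?_
    calc ∫⁻ x, f x ∂ρ ≤ ∫⁻ _, C ∂ρ := lintegral_mono hf
      _ = C := by simp [lintegral_const, measure_univ]
  have hfinI2 : ∫⁻ x, f x * f x ∂ρ ≠ ∞ := by
    refine ne_top_of_le_ne_top (ENNReal.mul_ne_top hC hC) ?_
    calc ∫⁻ x, f x * f x ∂ρ ≤ ∫⁻ _, C * C ∂ρ :=
          lintegral_mono fun x => mul_le_mul' (hf x) (hf x)
      _ = C * C := by simp [lintegral_const, measure_univ]
  set t : ℝ := ∫ x, h x ∂ρ with ht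
  have expand : (fun x => (h x - t) * (h x - t))
      = fun x => (h x * h x - (2 * t) * h x) + t * t := by
    funext x; ring
  have hint3 : Integrable (fun x => (h x - t) * (h x - t)) ρ := by
    rw [expand]
    exact (hint2.sub (hint.const_mul _)).add (integrable_const _)
  have i1 : Integrable (fun x => h x * h x - 2 * t * h x) ρ :=
    hint2.sub (hint.const_mul (2 * t))
  have hvar : ∫ x, (h x - t) * (h x - t) ∂ρ = ∫ x, h x * h x ∂ρ - t * t := by
    calc ∫ x, (h x - t) * (h x - t) ∂ρ
        = ∫ x, (h x * h x - 2 * t * h x) + t * t ∂ρ := by rw [expand]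
      _ = (∫ x, h x * h x - 2 * t * h x ∂ρ) + ∫ _, t * t ∂ρ :=
          integral_add i1 (integrable_const _)
      _ = ((∫ x, h x * h x ∂ρ) - ∫ x, 2 * t * h x ∂ρ) + ∫ _, t * t ∂ρ := by
          rw [integral_sub hint2 (hint.const_mul (2 * t))]
      _ = ∫ x, h x * h x ∂ρ - t * t := by
          rw [integral_const_mul, integral_const]
          simp only [measure_univ, probReal_univ, ENNReal.toReal_one, smul_eq_mul, one_mul]
          ring
  constructor
  · have h0 : (0:ℝ) ≤ ∫ x, (h x - t) * (h x - t) ∂ρ :=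
      integral_nonneg fun x => mul_self_nonneg _
    have hR : t * t ≤ ∫ x, h x * h x ∂ρ := by
      have := hvar ▸ h0; linarith
    refine (ENNReal.toReal_le_toReal (ENNReal.mul_ne_top hfinI hfinI) hfinI2).mp ?_
    rw [ENNReal.toReal_mul, ← hI, ← hI2]
    exact hR
  · intro heq
    have h2 : ∫ x, (h x - t) * (h x - t) ∂ρ = 0 := by
      rw [hvar, hI2, ← heq, ENNReal.toReal_mul, ← hI]; ring
    have hz := (integral_eq_zero_iff_of_nonneg (fun x => mul_self_nonneg (h x - t)) hint3).mp h2
    have hae : h =ᵐ[ρ] fun _ => t := by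
      filter_upwards [hz] with x hx
      have hx0 : (h x - t) * (h x - t) = 0 := hx
      have := mul_self_eq_zero.mp hx0
      linarith
    filter_upwards [hae] with x hx
    calc f x = ENNReal.ofReal (h x) := (ENNReal.ofReal_toReal (hfin x)).symm
      _ = ENNReal.ofReal t := by rw [hx]
      _ = ∫⁻ x, f x ∂ρ := by rw [hI, ENNReal.ofReal_toReal hfinI]

end SOTSymmAux

end

section MainProof

open SOTSymmAux

variable {X : Type*} [MeasurableSpace X] [TopologicalSpace X] [PolishSpace X] [BorelSpace X]
  {d : ℕ}

/-- Construction of the reversed kernel by disintegrating the transpose coupling. -/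
lemma sot_exists_kernel (hd : d ≠ 0) (μ ν : Fin d → Measure X)
    (hμ : ∀ j, IsProbabilityMeasure (μ j)) (hν : ∀ j, IsProbabilityMeasure (ν j))
    (κ : Kernel X X) (hκ : IsMarkovKernel κ)
    (hEq : ∀ j (B : Set X), MeasurableSet B → ∫⁻ x, κ x B ∂(μ j) = ν j B) :
    ∃ κ' : Kernel X X, IsMarkovKernel κ' ∧
      (∀ F : X × X → ℝ≥0∞, Measurable F →
        ∫⁻ y, ∫⁻ x, F (y, x) ∂(κ' y) ∂(avgProb ν) = ∫⁻ x, ∫⁻ y, F (y, x) ∂(κ x) ∂(avgProb μ)) ∧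
      (∀ j, (fun y => ∫⁻ x, dens μ j x ∂(κ' y)) =ᵐ[avgProb ν] dens ν j) := by
  haveI hM := isProbabilityMeasure_avgProb hd μ hμ
  haveI hN := isProbabilityMeasure_avgProb hd ν hν
  haveI : Nonempty X := by
    rcases isEmpty_or_nonempty X with h | h
    · exfalso
      haveI := hμ ⟨0, Nat.pos_of_ne_zero hd⟩
      have h1 : (μ ⟨0, Nat.pos_of_ne_zero hd⟩) Set.univ = 1 := measure_univ
      rw [Set.univ_eq_empty_iff.mpr h, measure_empty] at h1
      exact zero_ne_one h1
    · exact h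
  set M := avgProb μ with hMdef
  set N := avgProb ν with hNdef
  set π : Measure (X × X) := M ⊗ₘ κ with hπ
  set πT : Measure (X × X) := π.map Prod.swap with hπT
  haveI : IsProbabilityMeasure π := by infer_instance
  haveI : IsProbabilityMeasure πT := Measure.isProbabilityMeasure_map measurable_swap.aemeasurable
  have h_snd : π.snd = N := by
    ext B hB
    rw [Measure.snd_apply hB, hπ, Measure.compProd_apply (measurable_snd hB)]
    have hpre : ∀ a : X, (Prod.mk a ⁻¹' (Prod.snd ⁻¹' B)) = B := fun a => rfl
    simp only [hpre]
    rw [hNdef, avgProb_apply]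
    have : ∫⁻ a, κ a B ∂M = (d : ℝ≥0∞)⁻¹ * ∑ j, ν j B := by
      rw [hMdef, avgProb, lintegral_smul_measure, lintegral_finset_sum_measure]
      congr 1
      exact Finset.sum_congr rfl fun j _ => hEq j B hB
    exact this
  have h_fst : πT.fst = N := by rw [hπT, Measure.fst_map_swap, h_snd]
  set κ' : Kernel X X := πT.condKernel with hκ'def
  haveI hκ' : IsMarkovKernel κ' := by rw [hκ'def]; infer_instance
  have hdis : N ⊗ₘ κ' = πT := by
    rw [hκ'def, ← h_fst]
    exact πT.disintegrate _
  have transfer : ∀ F : X × X → ℝ≥0∞, Measurable F →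
      ∫⁻ y, ∫⁻ x, F (y, x) ∂(κ' y) ∂N = ∫⁻ x, ∫⁻ y, F (y, x) ∂(κ x) ∂M := by
    intro F hF
    rw [← Measure.lintegral_compProd hF, hdis, hπT, lintegral_map hF measurable_swap, hπ]
    exact Measure.lintegral_compProd (hF.comp measurable_swap)
  refine ⟨κ', hκ', transfer, fun j => ?_⟩
  have hmj : Measurable fun y => ∫⁻ x, dens μ j x ∂(κ' y) :=
    Measurable.lintegral_kernel_prod_right ((dens_measurable μ j).comp measurable_snd)
  refine ae_eq_of_forall_setLIntegral_eq_of_sigmaFinite hmj (dens_measurable ν j)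
    (fun B hB _ => ?_)
  have hind : Measurable fun p : X × X => B.indicator (fun _ => (1:ℝ≥0∞)) p.1 * dens μ j p.2 :=
    ((measurable_const.indicator hB).comp measurable_fst).mul
      ((dens_measurable μ j).comp measurable_snd)
  calc ∫⁻ y in B, ∫⁻ x, dens μ j x ∂(κ' y) ∂N
      = ∫⁻ y, B.indicator (fun y => ∫⁻ x, dens μ j x ∂(κ' y)) y ∂N := by
        rw [lintegral_indicator hB]
    _ = ∫⁻ y, ∫⁻ x, B.indicator (fun _ => (1:ℝ≥0∞)) y * dens μ j x ∂(κ' y) ∂N := by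
        refine lintegral_congr fun y => ?_
        by_cases hy : y ∈ B
        · simp [Set.indicator_of_mem hy]
        · simp [Set.indicator_of_notMem hy]
    _ = ∫⁻ x, ∫⁻ y, B.indicator (fun _ => (1:ℝ≥0∞)) y * dens μ j x ∂(κ x) ∂M :=
        transfer _ hind
    _ = ∫⁻ x, dens μ j x * κ x B ∂M := by
        refine lintegral_congr fun x => ?_
        rw [lintegral_mul_const _ (measurable_const.indicator hB), lintegral_indicator hB,
          setLIntegral_one, mul_comm]
    _ = ∫⁻ x, κ x B ∂(M.withDensity (dens μ j)) := by
        rw [lintegral_withDensity_eq_lintegral_mul _ (dens_measurable μ j)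
          (Kernel.measurable_coe κ hB)]
        rfl
    _ = ∫⁻ x, κ x B ∂(μ j) := by rw [hMdef, withDensity_dens hd μ hμ j]
    _ = ν j B := hEq j B hB
    _ = ((avgProb ν).withDensity (dens ν j)) B := by rw [withDensity_dens hd ν hν j]
    _ = ∫⁻ y in B, dens ν j y ∂N := withDensity_apply _ hB

/-- Second moment of the density decreases along a simultaneous transport. -/
lemma sot_sq_le (hd : d ≠ 0) (μ ν : Fin d → Measure X)
    (hμ : ∀ j, IsProbabilityMeasure (μ j)) (hν : ∀ j, IsProbabilityMeasure (ν j))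
    (κ : Kernel X X) (hκ : IsMarkovKernel κ)
    (hEq : ∀ j (B : Set X), MeasurableSet B → ∫⁻ x, κ x B ∂(μ j) = ν j B) (j : Fin d) :
    ∫⁻ y, dens ν j y * dens ν j y ∂(avgProb ν) ≤
      ∫⁻ x, dens μ j x * dens μ j x ∂(avgProb μ) := by
  haveI hM := isProbabilityMeasure_avgProb hd μ hμ
  haveI hN := isProbabilityMeasure_avgProb hd ν hν
  obtain ⟨κ', hκ', transfer, claimA⟩ := sot_exists_kernel hd μ ν hμ hν κ hκ hEq
  have hdtop : (d : ℝ≥0∞) ≠ ∞ := ENNReal.natCast_ne_top d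
  calc ∫⁻ y, dens ν j y * dens ν j y ∂(avgProb ν)
      = ∫⁻ y, (∫⁻ x, dens μ j x ∂(κ' y)) * (∫⁻ x, dens μ j x ∂(κ' y)) ∂(avgProb ν) := by
        refine lintegral_congr_ae ?_
        filter_upwards [claimA j] with y hy
        rw [hy]
    _ ≤ ∫⁻ y, ∫⁻ x, dens μ j x * dens μ j x ∂(κ' y) ∂(avgProb ν) := by
        refine lintegral_mono fun y => ?_
        haveI := hκ'.isProbabilityMeasure y
        exact (fiber (dens_measurable μ j) hdtop (dens_le μ j)).1
    _ = ∫⁻ x, ∫⁻ y, dens μ j x * dens μ j x ∂(κ x) ∂(avgProb μ) :=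
        transfer (fun p => dens μ j p.2 * dens μ j p.2)
          (((dens_measurable μ j).comp measurable_snd).mul
            ((dens_measurable μ j).comp measurable_snd))
    _ = ∫⁻ x, dens μ j x * dens μ j x ∂(avgProb μ) := by
        refine lintegral_congr fun x => ?_
        haveI := hκ.isProbabilityMeasure x
        rw [lintegral_const, measure_univ, mul_one]

lemma sot_key_subset (μ ν : Fin d → Measure X)
    (hμ : ∀ j, IsProbabilityMeasure (μ j)) (hν : ∀ j, IsProbabilityMeasure (ν j))
    (hbwd : ∃ κ : Kernel X X, IsMarkovKernel κ ∧
      ∀ j, ∀ B : Set X, MeasurableSet B → μ j B ≤ ∫⁻ x, κ x B ∂(ν j))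
    (c : X × X → ℝ≥0∞) (hc : Measurable c) (hsymm : ∀ x y, c (x, y) = c (y, x)) :
    {r | ∃ κ : Kernel X X, IsMarkovKernel κ ∧
      (∀ j, ∀ B : Set X, MeasurableSet B → ν j B ≤ ∫⁻ x, κ x B ∂(μ j)) ∧
      r = ∫⁻ x, ∫⁻ y, c (x, y) ∂(κ x) ∂(avgProb μ)} ⊆
    {r | ∃ κ : Kernel X X, IsMarkovKernel κ ∧
      (∀ j, ∀ B : Set X, MeasurableSet B → μ j B ≤ ∫⁻ x, κ x B ∂(ν j)) ∧
      r = ∫⁻ x, ∫⁻ y, c (x, y) ∂(κ x) ∂(avgProb ν)} := by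
  rcases Nat.eq_zero_or_pos d with hd | hdpos
  · subst hd
    rintro r ⟨κ, hκ, -, hr⟩
    have hzero : ∀ (ρ : Fin 0 → Measure X), avgProb ρ = 0 := by
      intro ρ; simp [avgProb]
    refine ⟨κ, hκ, fun j => j.elim0, ?_⟩
    rw [hr, hzero μ, hzero ν]
  have hd : d ≠ 0 := Nat.pos_iff_ne_zero.mp hdpos
  haveI hM := isProbabilityMeasure_avgProb hd μ hμ
  haveI hN := isProbabilityMeasure_avgProb hd ν hν
  have hdtop : (d : ℝ≥0∞) ≠ ∞ := ENNReal.natCast_ne_top d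
  rintro r ⟨κ, hκ, hcon, hr⟩
  have hEq : ∀ j (B : Set X), MeasurableSet B → ∫⁻ x, κ x B ∂(μ j) = ν j B :=
    constraint_eq μ ν hμ hν κ hκ hcon
  obtain ⟨lam, hlam, hconb⟩ := hbwd
  have hEqb : ∀ j (B : Set X), MeasurableSet B → ∫⁻ x, lam x B ∂(ν j) = μ j B :=
    constraint_eq ν μ hν hμ lam hlam hconb
  obtain ⟨κ', hκ', transfer, claimA⟩ := sot_exists_kernel hd μ ν hμ hν κ hκ hEq
  -- second moments are equal
  have hEqsq : ∀ j, ∫⁻ y, dens ν j y * dens ν j y ∂(avgProb ν)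
      = ∫⁻ x, dens μ j x * dens μ j x ∂(avgProb μ) := fun j =>
    le_antisymm (sot_sq_le hd μ ν hμ hν κ hκ hEq j) (sot_sq_le hd ν μ hν hμ lam hlam hEqb j)
  -- pointwise a.e. saturation of Cauchy-Schwarz on fibers
  have hsat : ∀ j, ∀ᵐ y ∂(avgProb ν),
      (∫⁻ x, dens μ j x ∂(κ' y)) * (∫⁻ x, dens μ j x ∂(κ' y))
        = ∫⁻ x, dens μ j x * dens μ j x ∂(κ' y) := by
    intro j
    have hmj : Measurable fun y => ∫⁻ x, dens μ j x ∂(κ' y) :=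
      Measurable.lintegral_kernel_prod_right ((dens_measurable μ j).comp measurable_snd)
    have hmj2 : Measurable fun y => ∫⁻ x, dens μ j x * dens μ j x ∂(κ' y) :=
      Measurable.lintegral_kernel_prod_right
        (((dens_measurable μ j).comp measurable_snd).mul
          ((dens_measurable μ j).comp measurable_snd))
    have hpt : ∀ y, (∫⁻ x, dens μ j x ∂(κ' y)) * (∫⁻ x, dens μ j x ∂(κ' y))
        ≤ ∫⁻ x, dens μ j x * dens μ j x ∂(κ' y) := fun y => by
      haveI := hκ'.isProbabilityMeasure y
      exact (fiber (dens_measurable μ j) hdtop (dens_le μ j)).1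
    have hintfin : ∫⁻ y, (∫⁻ x, dens μ j x ∂(κ' y)) * (∫⁻ x, dens μ j x ∂(κ' y))
        ∂(avgProb ν) ≠ ∞ := by
      refine ne_top_of_le_ne_top (ENNReal.mul_ne_top hdtop hdtop) ?_
      calc ∫⁻ y, (∫⁻ x, dens μ j x ∂(κ' y)) * (∫⁻ x, dens μ j x ∂(κ' y)) ∂(avgProb ν)
          ≤ ∫⁻ _, (d : ℝ≥0∞) * d ∂(avgProb ν) := by
            refine lintegral_mono fun y => ?_
            haveI := hκ'.isProbabilityMeasure y
            have hb : ∫⁻ x, dens μ j x ∂(κ' y) ≤ d := by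
              calc ∫⁻ x, dens μ j x ∂(κ' y) ≤ ∫⁻ _, (d : ℝ≥0∞) ∂(κ' y) :=
                    lintegral_mono (dens_le μ j)
                _ = d := by simp [lintegral_const, measure_univ]
            exact mul_le_mul' hb hb
        _ = (d : ℝ≥0∞) * d := by simp [lintegral_const, measure_univ]
    have hintle : ∫⁻ y, ∫⁻ x, dens μ j x * dens μ j x ∂(κ' y) ∂(avgProb ν)
        ≤ ∫⁻ y, (∫⁻ x, dens μ j x ∂(κ' y)) * (∫⁻ x, dens μ j x ∂(κ' y)) ∂(avgProb ν) := by
      have e1 : ∫⁻ y, ∫⁻ x, dens μ j x * dens μ j x ∂(κ' y) ∂(avgProb ν)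
          = ∫⁻ x, dens μ j x * dens μ j x ∂(avgProb μ) := by
        rw [transfer (fun p => dens μ j p.2 * dens μ j p.2)
          (((dens_measurable μ j).comp measurable_snd).mul
            ((dens_measurable μ j).comp measurable_snd))]
        refine lintegral_congr fun x => ?_
        haveI := hκ.isProbabilityMeasure x
        simp [lintegral_const, measure_univ]
      have e2 : ∫⁻ y, (∫⁻ x, dens μ j x ∂(κ' y)) * (∫⁻ x, dens μ j x ∂(κ' y)) ∂(avgProb ν)
          = ∫⁻ y, dens ν j y * dens ν j y ∂(avgProb ν) := by
        refine lintegral_congr_ae ?_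
        filter_upwards [claimA j] with y hy
        rw [hy]
      rw [e1, e2, hEqsq j]
    exact ae_eq_of_ae_le_of_lintegral_le (ae_of_all _ hpt) hintfin hmj2.aemeasurable hintle
  -- conclude a.e. fiberwise constancy of densities
  have hfiber : ∀ᵐ y ∂(avgProb ν), ∀ j, dens μ j =ᵐ[κ' y] fun _ => dens ν j y := by
    rw [ae_all_iff]
    intro j
    filter_upwards [hsat j, claimA j] with y hy1 hy2
    haveI := hκ'.isProbabilityMeasure y
    have := (fiber (ρ := κ' y) (dens_measurable μ j) hdtop (dens_le μ j)).2 hy1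
    filter_upwards [this] with x hx
    rw [hx, hy2]
  refine ⟨κ', hκ', ?_, ?_⟩
  · -- constraints for the reversed transport
    intro j B hB
    have hchain : ∫⁻ y, κ' y B ∂(ν j) = μ j B := by
      calc ∫⁻ y, κ' y B ∂(ν j)
          = ∫⁻ y, κ' y B ∂((avgProb ν).withDensity (dens ν j)) := by
            rw [withDensity_dens hd ν hν j]
        _ = ∫⁻ y, dens ν j y * κ' y B ∂(avgProb ν) := by
            rw [lintegral_withDensity_eq_lintegral_mul _ (dens_measurable ν j)
              (Kernel.measurable_coe κ' hB)]
            rfl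
        _ = ∫⁻ y, ∫⁻ x, B.indicator (fun _ => (1:ℝ≥0∞)) x * dens μ j x ∂(κ' y)
              ∂(avgProb ν) := by
            refine lintegral_congr_ae ?_
            filter_upwards [hfiber] with y hy
            have : ∫⁻ x, B.indicator (fun _ => (1:ℝ≥0∞)) x * dens μ j x ∂(κ' y)
                = ∫⁻ x, B.indicator (fun _ => (1:ℝ≥0∞)) x * dens ν j y ∂(κ' y) := by
              refine lintegral_congr_ae ?_
              filter_upwards [hy j] with x hx
              rw [hx]
            rw [this, lintegral_mul_const _ (measurable_const.indicator hB),
              lintegral_indicator hB, setLIntegral_one, mul_comm]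
        _ = ∫⁻ x, ∫⁻ y, B.indicator (fun _ => (1:ℝ≥0∞)) x * dens μ j x ∂(κ x)
              ∂(avgProb μ) :=
            transfer _ (((measurable_const.indicator hB).comp measurable_snd).mul
              ((dens_measurable μ j).comp measurable_snd))
        _ = ∫⁻ x, B.indicator (fun _ => (1:ℝ≥0∞)) x * dens μ j x ∂(avgProb μ) := by
            refine lintegral_congr fun x => ?_
            haveI := hκ.isProbabilityMeasure x
            rw [lintegral_const, measure_univ, mul_one]
        _ = ∫⁻ x in B, dens μ j x ∂(avgProb μ) := by
            rw [← lintegral_indicator hB]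
            refine lintegral_congr fun x => ?_
            by_cases hx : x ∈ B
            · simp [Set.indicator_of_mem hx]
            · simp [Set.indicator_of_notMem hx]
        _ = ((avgProb μ).withDensity (dens μ j)) B := (withDensity_apply _ hB).symm
        _ = μ j B := by rw [withDensity_dens hd μ hμ j]
    exact le_of_eq hchain.symm
  · -- equality of costs
    rw [hr]
    rw [transfer c hc]
    refine lintegral_congr fun x => lintegral_congr fun y => ?_
    exact hsymm x y

end MainProof

noncomputable section

/-- for a continuous symmetric cost, if transports exist in both directions
then the simultaneous optimal transport cost is symmetric: `I_c(μ,ν) = I_c(ν,μ)`. -/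
theorem sot_cost_symm
    {X : Type*} [MeasurableSpace X] [TopologicalSpace X] [PolishSpace X] [BorelSpace X]
    {d : ℕ} (μ ν : Fin d → Measure X)
    (hμ : ∀ j, IsProbabilityMeasure (μ j)) (hν : ∀ j, IsProbabilityMeasure (ν j))
    (hfwd : ∃ κ : Kernel X X, IsMarkovKernel κ ∧
      ∀ j, ∀ B : Set X, MeasurableSet B → ν j B ≤ ∫⁻ x, κ x B ∂(μ j))
    (hbwd : ∃ κ : Kernel X X, IsMarkovKernel κ ∧
      ∀ j, ∀ B : Set X, MeasurableSet B → μ j B ≤ ∫⁻ x, κ x B ∂(ν j))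
    (c : X × X → ℝ≥0) (hc : Continuous c) (hsymm : ∀ x y, c (x, y) = c (y, x)) :
    sotInfCost μ ν (fun p => (c p : ℝ≥0∞)) = sotInfCost ν μ (fun p => (c p : ℝ≥0∞)) := by
  have hcm : Measurable fun p : X × X => ((c p : ℝ≥0∞)) :=
    measurable_coe_nnreal_ennreal.comp hc.measurable
  have hcs : ∀ x y : X, ((c (x, y) : ℝ≥0∞)) = ((c (y, x) : ℝ≥0∞)) := fun x y => by
    rw [hsymm x y]
  rw [sotInfCost, sotInfCost]
  congr 1
  exact Set.Subset.antisymm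
    (sot_key_subset μ ν hμ hν hbwd _ hcm hcs)
    (sot_key_subset ν μ hν hμ hfwd _ hcm hcs)

end
end

section
/- Let (X, ρ) be a Polish metric space, let p ≥ 1, and let μ, ν ∈ P(X)^d be d-tuples of Borel probability measures on X. Then the simultaneous p-th transport cost dominates the average of the classical ones: inf_{π ∈ Π(μ,ν)} ∫_{X×X} ρ(x,y)^p π(dx,dy) ≥ (1/d) ∑ⱼ W_p(μⱼ,νⱼ)^p, where W_p(μⱼ,νⱼ)^p := inf over all couplings γ of μⱼ and νⱼ of ∫ ρ(x,y)^p γ(dx,dy), and the infimum over an empty set is +∞. -/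
open MeasureTheory ProbabilityTheory ENNReal

noncomputable section

/-- The set `Π(μ,ν) = {μ̄ ⊗ κ : κ ∈ K(μ,ν)}` of simultaneous transport plans. -/
def PiSet {X : Type*} [MeasurableSpace X] {d : ℕ}
    (μ : Fin d → Measure X) (ν : Fin d → Measure X) : Set (Measure (X × X)) :=
  {π | ∃ κ : Kernel X X, IsMarkovKernel κ ∧
    (∀ j, ∀ B : Set X, MeasurableSet B → ν j B ≤ ∫⁻ x, κ x B ∂(μ j)) ∧
    π = (avgProb μ).compProd κ}

/-- The `p`-th power Wasserstein cost between two probability measures, as an infimum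
over couplings. -/
def wassersteinCostP {X : Type*} [MeasurableSpace X] [MetricSpace X]
    (α β : Measure X) (p : ℝ) : ℝ≥0∞ :=
  sInf {r | ∃ γ : Measure (X × X), γ.map Prod.fst = α ∧ γ.map Prod.snd = β ∧
    r = ∫⁻ q, ENNReal.ofReal (dist q.1 q.2 ^ p) ∂γ}

/-! For `π = μ̄ ⊗ κ` with `κ ∈ K(μ,ν)`, each `μⱼ ⊗ κ` is a coupling of `μⱼ` and `νⱼ`: its second
marginal `κ ∘ μⱼ` dominates the probability measure `νⱼ` and is itself a probability measure, so
the two are equal. Since `μ̄ ⊗ κ = (1/d) ∑ⱼ μⱼ ⊗ κ`, the cost of `π` is the average of the costs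
of these couplings, each of which is at least `W_p(μⱼ,νⱼ)^p`. -/

lemma snd_compProd_eq_of_le_lintegral {X Y : Type*} [MeasurableSpace X] [MeasurableSpace Y]
    {α : Measure X} {β : Measure Y} [IsProbabilityMeasure α] [IsProbabilityMeasure β]
    {κ : Kernel X Y} [IsMarkovKernel κ]
    (h : ∀ B : Set Y, MeasurableSet B → β B ≤ ∫⁻ x, κ x B ∂α) :
    (α ⊗ₘ κ).snd = β := by
  rw [Measure.snd_compProd]
  refine (Measure.eq_of_le_of_isProbabilityMeasure (Measure.le_iff.2 fun B hB ↦ ?_)).symm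
  rw [Measure.bind_apply hB κ.aemeasurable]
  exact h B hB

lemma avgProb_compProd {X Y : Type*} [MeasurableSpace X] [MeasurableSpace Y] {d : ℕ}
    (μ : Fin d → Measure X) [∀ j, SFinite (μ j)] (κ : Kernel X Y) [IsSFiniteKernel κ] :
    avgProb μ ⊗ₘ κ = (d : ℝ≥0∞)⁻¹ • ∑ j, μ j ⊗ₘ κ := by
  rw [avgProb, ← Measure.sum_fintype, Measure.compProd_smul_left, Measure.compProd_sum_left,
    Measure.sum_fintype]

lemma wassersteinCostP_le_lintegral {X : Type*} [MeasurableSpace X] [MetricSpace X]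
    {α β : Measure X} {γ : Measure (X × X)} (hα : γ.map Prod.fst = α) (hβ : γ.map Prod.snd = β)
    (p : ℝ) : wassersteinCostP α β p ≤ ∫⁻ q, ENNReal.ofReal (dist q.1 q.2 ^ p) ∂γ :=
  sInf_le ⟨γ, hα, hβ, rfl⟩

theorem sot_cost_ge_avg_wasserstein_general
    {X : Type*} [MeasurableSpace X] [MetricSpace X]
    {d : ℕ} (μ ν : Fin d → Measure X)
    (hμ : ∀ j, IsProbabilityMeasure (μ j)) (hν : ∀ j, IsProbabilityMeasure (ν j))
    (p : ℝ) :
    (d : ℝ≥0∞)⁻¹ * ∑ j, wassersteinCostP (μ j) (ν j) p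
      ≤ sInf {r : ℝ≥0∞ | ∃ π ∈ PiSet μ ν,
          r = ∫⁻ q, ENNReal.ofReal (dist q.1 q.2 ^ p) ∂π} := by
  refine le_sInf ?_
  rintro _ ⟨_, ⟨κ, hκ, hcover, rfl⟩, rfl⟩
  rw [avgProb_compProd, lintegral_smul_measure, lintegral_finsetSum_measure, smul_eq_mul]
  gcongr with j
  exact wassersteinCostP_le_lintegral (Measure.fst_compProd (μ j) κ)
    (snd_compProd_eq_of_le_lintegral (hcover j)) p

/-- the simultaneous `p`-th transport cost dominates the average of the
classical `p`-th Wasserstein costs of the components. -/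
theorem sot_cost_ge_avg_wasserstein
    {X : Type*} [MeasurableSpace X] [MetricSpace X] [PolishSpace X] [BorelSpace X]
    {d : ℕ} (μ ν : Fin d → Measure X)
    (hμ : ∀ j, IsProbabilityMeasure (μ j)) (hν : ∀ j, IsProbabilityMeasure (ν j))
    (p : ℝ) (hp : 1 ≤ p) :
    (d : ℝ≥0∞)⁻¹ * ∑ j, wassersteinCostP (μ j) (ν j) p
      ≤ sInf {r : ℝ≥0∞ | ∃ π ∈ PiSet μ ν,
          r = ∫⁻ q, ENNReal.ofReal (dist q.1 q.2 ^ p) ∂π} :=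
  sot_cost_ge_avg_wasserstein_general μ ν hμ hν p

end
end
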